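/- arXiv:2601.11113 — 2 statements merged into one kernel-verified Lean document; each statement's English description precedes it below -/
import Mathlib

section
/- Let T be a natural number and for each i ∈ {1, …, T} let M_i be a mechanism assigning to each dataset d in a type D a probability measure M_i d on a measurable space Ω_i, where all M_i share the same neighboring relation adj on D. If each M_i satisfies (ε_i, δ_i)-differential privacy, then the combined mechanism d ↦ ⨂_{i} (M_i d) (the product probability measure of the M_i d on ∏_i Ω_i, corresponding to running all mechanisms with independent randomness) satisfies (∑_{i=1}^T ε_i, ∑_{i=1}^T δ_i)-differential privacy. -/
open MeasureTheory

open Set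
open scoped ENNReal


theorem dp_lintegral {α : Type*} [MeasurableSpace α] (μ ν : Measure α)
    (a b : ℝ≥0∞) (ha : a ≠ ∞)
    (h : ∀ S, MeasurableSet S → μ S ≤ a * ν S + b)
    (f : α → ℝ≥0∞) (hf : Measurable f) (hf1 : ∀ x, f x ≤ 1) :
    ∫⁻ x, f x ∂μ ≤ a * ∫⁻ x, f x ∂ν + b := by
  set g : α → ℝ := fun x => (f x).toReal with hg
  have hgm : Measurable g := hf.ennreal_toReal
  have hfg : ∀ x, f x = ENNReal.ofReal (g x) := fun x =>
    (ENNReal.ofReal_toReal (lt_of_le_of_lt (hf1 x) ENNReal.one_lt_top).ne).symm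
  have hg1 : ∀ x, g x ≤ 1 := fun x => by
    simpa using ENNReal.toReal_mono ENNReal.one_ne_top (hf1 x)
  have key : ∀ (κ : Measure α), ∫⁻ x, f x ∂κ = ∫⁻ t in Ioi (0:ℝ), κ {x | t < g x} := by
    intro κ
    simp_rw [hfg]
    exact lintegral_eq_lintegral_meas_lt κ (Filter.Eventually.of_forall fun x =>
      ENNReal.toReal_nonneg) hgm.aemeasurable
  have hIoi : Ioi (0:ℝ) = Ioc (0:ℝ) 1 ∪ Ioi 1 := (Ioc_union_Ioi_eq_Ioi zero_le_one).symm
  have hzero : ∀ (κ : Measure α), ∫⁻ t in Ioi (1:ℝ), κ {x | t < g x} = 0 := by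
    intro κ
    rw [setLIntegral_congr_fun measurableSet_Ioi
      (fun ⦃t⦄ (ht : t ∈ Ioi (1:ℝ)) => ?_), lintegral_zero]
    have : {x | t < g x} = ∅ := by
      ext x; simp only [mem_setOf_eq, mem_empty_iff_false, iff_false, not_lt]
      exact (hg1 x).trans ht.le
    simp [this]
  have hsplit : ∫⁻ t in Ioi (0:ℝ), μ {x | t < g x}
      = ∫⁻ t in Ioc (0:ℝ) 1, μ {x | t < g x} := by
    rw [hIoi, lintegral_union measurableSet_Ioi Ioc_disjoint_Ioi_same, hzero, add_zero]
  calc ∫⁻ x, f x ∂μ = ∫⁻ t in Ioc (0:ℝ) 1, μ {x | t < g x} := by rw [key, hsplit]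
    _ ≤ ∫⁻ t in Ioc (0:ℝ) 1, (a * ν {x | t < g x} + b) := by
        refine lintegral_mono fun t => h _ ?_
        exact hgm measurableSet_Ioi
    _ = a * (∫⁻ t in Ioc (0:ℝ) 1, ν {x | t < g x}) + b := by
        rw [lintegral_add_right _ measurable_const, lintegral_const_mul' _ _ ha,
          setLIntegral_const, Real.volume_Ioc]
        norm_num
    _ ≤ a * (∫⁻ t in Ioi (0:ℝ), ν {x | t < g x}) + b :=
        add_le_add_left (mul_le_mul_right (lintegral_mono_set Ioc_subset_Ioi_self) a) b
    _ = a * (∫⁻ x, f x ∂ν) + b := by rw [key]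

theorem dp_prod {α β : Type*} [MeasurableSpace α] [MeasurableSpace β]
    (μ₁ ν₁ : Measure α) (μ₂ ν₂ : Measure β)
    [IsProbabilityMeasure μ₁] [IsProbabilityMeasure ν₁]
    [IsProbabilityMeasure μ₂] [IsProbabilityMeasure ν₂]
    (a₁ b₁ a₂ b₂ : ℝ≥0∞) (ha₁ : a₁ ≠ ∞) (ha₂ : a₂ ≠ ∞)
    (h₁ : ∀ S, MeasurableSet S → μ₁ S ≤ a₁ * ν₁ S + b₁)
    (h₂ : ∀ S, MeasurableSet S → μ₂ S ≤ a₂ * ν₂ S + b₂)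
    (S : Set (α × β)) (hS : MeasurableSet S) :
    (μ₁.prod μ₂) S ≤ (a₁ * a₂) * (ν₁.prod ν₂) S + (b₁ + b₂) := by
  set g : α → ℝ≥0∞ := fun x => min 1 (a₂ * ν₂ (Prod.mk x ⁻¹' S)) with hgdef
  have hgm : Measurable g :=
    measurable_const.min ((measurable_measure_prodMk_left hS).const_mul a₂)
  have hg1 : ∀ x, g x ≤ 1 := fun x => min_le_left _ _
  have step1 : (μ₁.prod μ₂) S ≤ (∫⁻ x, g x ∂μ₁) + b₂ := by
    rw [Measure.prod_apply hS]
    have : (∫⁻ x, g x ∂μ₁) + b₂ = ∫⁻ x, (g x + b₂) ∂μ₁ := by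
      rw [lintegral_add_right _ measurable_const, lintegral_const, measure_univ, mul_one]
    rw [this]
    refine lintegral_mono fun x => ?_
    have hmeas : MeasurableSet (Prod.mk x ⁻¹' S) := measurable_prodMk_left hS
    have h1 : μ₂ (Prod.mk x ⁻¹' S) ≤ min 1 (a₂ * ν₂ (Prod.mk x ⁻¹' S) + b₂) :=
      le_min prob_le_one (h₂ _ hmeas)
    refine h1.trans ?_
    calc min 1 (a₂ * ν₂ (Prod.mk x ⁻¹' S) + b₂)
        ≤ min (1 + b₂) (a₂ * ν₂ (Prod.mk x ⁻¹' S) + b₂) :=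
          min_le_min (le_add_right le_rfl) le_rfl
      _ = g x + b₂ := by rw [hgdef]; simp [min_add_add_right]
  have step2 : (∫⁻ x, g x ∂μ₁) ≤ a₁ * (∫⁻ x, g x ∂ν₁) + b₁ :=
    dp_lintegral μ₁ ν₁ a₁ b₁ ha₁ h₁ g hgm hg1
  have step3 : (∫⁻ x, g x ∂ν₁) ≤ a₂ * (ν₁.prod ν₂) S := by
    rw [Measure.prod_apply hS, ← lintegral_const_mul' _ _ ha₂]
    exact lintegral_mono fun x => min_le_right _ _
  calc (μ₁.prod μ₂) S ≤ (∫⁻ x, g x ∂μ₁) + b₂ := step1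
    _ ≤ (a₁ * (∫⁻ x, g x ∂ν₁) + b₁) + b₂ := add_le_add_left step2 b₂
    _ ≤ (a₁ * (a₂ * (ν₁.prod ν₂) S) + b₁) + b₂ :=
        add_le_add_left (add_le_add_left (mul_le_mul_right step3 a₁) b₁) b₂
    _ = (a₁ * a₂) * (ν₁.prod ν₂) S + (b₁ + b₂) := by ring

theorem dp_pi : ∀ (T : ℕ) {Ω : Fin T → Type u} [mΩ : ∀ i, MeasurableSpace (Ω i)]
    (μ ν : ∀ i, Measure (Ω i))
    (hμ : ∀ i, IsProbabilityMeasure (μ i)) (hν : ∀ i, IsProbabilityMeasure (ν i))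
    (a b : Fin T → ℝ≥0∞) (ha : ∀ i, a i ≠ ∞)
    (h : ∀ i, ∀ S, MeasurableSet S → μ i S ≤ a i * ν i S + b i),
    ∀ S : Set (∀ i, Ω i), MeasurableSet S →
      Measure.pi μ S ≤ (∏ i, a i) * Measure.pi ν S + ∑ i, b i := by
  intro T
  induction T with
  | zero =>
    intro Ω mΩ μ ν hμ hν a b ha h S hS
    have : IsProbabilityMeasure (Measure.pi μ) := MeasureTheory.Measure.pi.instIsProbabilityMeasure _
    have : IsProbabilityMeasure (Measure.pi ν) := MeasureTheory.Measure.pi.instIsProbabilityMeasure _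
    have hSeq : Measure.pi μ S = Measure.pi ν S := by
      rcases Set.eq_empty_or_nonempty S with rfl | hne
      · simp
      · have : S = Set.univ := by
          have : Subsingleton (∀ i : Fin 0, Ω i) := ⟨fun f g => funext fun i => i.elim0⟩
          obtain ⟨x, hx⟩ := hne
          exact Set.eq_univ_of_forall fun y => (Subsingleton.elim x y) ▸ hx
        rw [this, measure_univ, measure_univ]
    simp [hSeq]
  | succ n ih =>
    intro Ω mΩ μ ν hμ hν a b ha h S hS
    haveI := hμ; haveI := hν
    set e := MeasurableEquiv.piFinSuccAbove Ω 0 with he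
    have hmpμ := measurePreserving_piFinSuccAbove μ 0
    have hmpν := measurePreserving_piFinSuccAbove ν 0
    have hS' : MeasurableSet (e.symm ⁻¹' S) := e.symm.measurable hS
    have happμ : Measure.pi μ S = ((μ 0).prod (Measure.pi fun j => μ ((0:Fin (n+1)).succAbove j))) (e.symm ⁻¹' S) := by
      rw [← hmpμ.map_eq, Measure.map_apply e.measurable hS']
      congr 1
      ext x
      simp [Set.mem_preimage]
      exact iff_of_eq (congrArg (· ∈ S) (e.symm_apply_apply x).symm)
    have happν : Measure.pi ν S = ((ν 0).prod (Measure.pi fun j => ν ((0:Fin (n+1)).succAbove j))) (e.symm ⁻¹' S) := by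
      rw [← hmpν.map_eq, Measure.map_apply e.measurable hS']
      congr 1
      ext x
      simp [Set.mem_preimage]
      exact iff_of_eq (congrArg (· ∈ S) (e.symm_apply_apply x).symm)
    have htail := ih (fun j => μ ((0:Fin (n+1)).succAbove j)) (fun j => ν ((0:Fin (n+1)).succAbove j))
      (fun j => hμ _) (fun j => hν _) (fun j => a ((0:Fin (n+1)).succAbove j))
      (fun j => b ((0:Fin (n+1)).succAbove j)) (fun j => ha _) (fun j => h _)
    haveI : IsProbabilityMeasure (Measure.pi fun j => μ ((0:Fin (n+1)).succAbove j)) :=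
      MeasureTheory.Measure.pi.instIsProbabilityMeasure _
    haveI : IsProbabilityMeasure (Measure.pi fun j => ν ((0:Fin (n+1)).succAbove j)) :=
      MeasureTheory.Measure.pi.instIsProbabilityMeasure _
    have key := dp_prod (μ 0) (ν 0) (Measure.pi fun j => μ ((0:Fin (n+1)).succAbove j))
      (Measure.pi fun j => ν ((0:Fin (n+1)).succAbove j))
      (a 0) (b 0) (∏ j, a ((0:Fin (n+1)).succAbove j)) (∑ j, b ((0:Fin (n+1)).succAbove j))
      (ha 0) (ENNReal.prod_ne_top fun j _ => ha _) (h 0) htail (e.symm ⁻¹' S) hS'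
    rw [happμ, happν]
    refine key.trans (le_of_eq ?_)
    have h0 : ∀ j : Fin n, (0:Fin (n+1)).succAbove j = j.succ := fun j => Fin.succAbove_zero ▸ rfl
    simp only [h0]
    rw [← Fin.prod_univ_succ a, ← Fin.sum_univ_succ b]


/-- Composition of differential privacy: if each mechanism `M i` is `(ε i, δ i)`-DP, then the
combined mechanism `d ↦ ⨂ i, M i d` (product of the `T` mechanisms run with independent
randomness) is `(∑ i, ε i, ∑ i, δ i)`-DP. -/
theorem dp_composition
    {D : Type*} (adj : D → D → Prop)
    (T : ℕ) {Ω : Fin T → Type*} [∀ i, MeasurableSpace (Ω i)]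
    (M : ∀ i : Fin T, D → Measure (Ω i))
    (hM : ∀ i d, IsProbabilityMeasure (M i d))
    (ε δ : Fin T → ℝ) (hε : ∀ i, 0 ≤ ε i) (hδ : ∀ i, 0 ≤ δ i)
    (hDP : ∀ i : Fin T, ∀ d d', adj d d' → ∀ S : Set (Ω i), MeasurableSet S →
      M i d S ≤ ENNReal.ofReal (Real.exp (ε i)) * M i d' S + ENNReal.ofReal (δ i)) :
    ∀ d d', adj d d' → ∀ S : Set (∀ i, Ω i), MeasurableSet S →
      Measure.pi (fun i => M i d) S ≤
        ENNReal.ofReal (Real.exp (∑ i, ε i)) * Measure.pi (fun i => M i d') S +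
          ENNReal.ofReal (∑ i, δ i) := by
  intro d d' hadj S hS
  have key := dp_pi T (fun i => M i d) (fun i => M i d') (fun i => hM i d) (fun i => hM i d')
    (fun i => ENNReal.ofReal (Real.exp (ε i))) (fun i => ENNReal.ofReal (δ i))
    (fun i => ENNReal.ofReal_ne_top) (fun i => hDP i d d' hadj) S hS
  have hprod : (∏ i, ENNReal.ofReal (Real.exp (ε i))) = ENNReal.ofReal (Real.exp (∑ i, ε i)) := by
    rw [Real.exp_sum, ← ENNReal.ofReal_prod_of_nonneg fun i _ => (Real.exp_pos _).le]
  have hsum : (∑ i, ENNReal.ofReal (δ i)) = ENNReal.ofReal (∑ i, δ i) :=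
    (ENNReal.ofReal_sum_of_nonneg fun i _ => hδ i).symm
  rw [hprod, hsum] at key
  exact key
end

section
/- Let D be a type with neighboring relation adj, let f : D → ℝ, and let C > 0 satisfy |f d − f d'| ≤ C for all d, d' with adj d d'. Let 0 < ε < 1 and 0 < δ < 1, and set σ = C · √(2 · log(1.25/δ)) / ε. Then the Gaussian mechanism d ↦ gaussianReal (f d) σ² (the Gaussian probability measure on ℝ with mean f d and variance σ²) satisfies (ε, δ)-differential privacy: for all adjacent d, d' and every measurable set S ⊆ ℝ, gaussianReal (f d) σ² S ≤ exp(ε) · gaussianReal (f d') σ² S + δ. -/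
open MeasureTheory ProbabilityTheory

set_option maxHeartbeats 1000000

section GaussianDPHelpers

open Real Set NNReal ENNReal

lemma gaussianReal_map_reflect (m : ℝ) (v : ℝ≥0) :
    (gaussianReal m v).map (fun x => 2*m - x) = gaussianReal m v := by
  have h1 : (fun x : ℝ => 2*m - x) = (fun x => x + 2*m) ∘ (fun x => (-1) * x) := by
    ext x; simp; ring
  have hc : NNReal.mk ((-1:ℝ)^2) (sq_nonneg _) = 1 := by ext; norm_num
  rw [h1, ← Measure.map_map (by fun_prop) (by fun_prop), gaussianReal_map_const_mul,
    hc, one_mul, gaussianReal_map_add_const]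
  norm_num
  congr 1
  ring

lemma gaussian_Ioi_le_half (m : ℝ) (v : ℝ≥0) : gaussianReal m v (Ioi m) ≤ 1/2 := by
  have hsymm : gaussianReal m v (Ioi m) = gaussianReal m v (Iio m) := by
    conv_lhs => rw [← gaussianReal_map_reflect m v]
    rw [Measure.map_apply (by fun_prop) measurableSet_Ioi]
    congr 1
    ext x
    simp only [mem_preimage, mem_Ioi, mem_Iio]
    constructor <;> intro <;> linarith
  have hunion : gaussianReal m v (Ioi m) + gaussianReal m v (Iio m) ≤ 1 := by
    rw [← measure_union (by exact (Set.Iio_disjoint_Ici le_rfl).mono_right Set.Ioi_subset_Ici_self |>.symm) measurableSet_Iio]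
    exact (measure_mono (subset_univ _)).trans_eq measure_univ
  rw [ENNReal.le_div_iff_mul_le (by norm_num) (by norm_num), mul_comm, two_mul]
  rw [hsymm] at hunion ⊢
  exact hunion

lemma gaussian_tail (m r : ℝ) (v : ℝ≥0) (hv : v ≠ 0) (hmr : m ≤ r) :
    gaussianReal m v (Ioi r) ≤ ENNReal.ofReal (exp (-(r-m)^2/(2*v)) / 2) := by
  have hvpos : (0:ℝ) < (v:ℝ) := by positivity
  have hpt : ∀ x ∈ Ioi r, gaussianPDF m v x
      ≤ ENNReal.ofReal (exp (-(r-m)^2/(2*(v:ℝ)))) * gaussianPDF r v x := by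
    intro x hx
    rw [gaussianPDF, gaussianPDF, ← ENNReal.ofReal_mul (exp_nonneg _)]
    refine ENNReal.ofReal_le_ofReal ?_
    have hxr : r ≤ x := le_of_lt hx
    calc gaussianPDFReal m v x
        = (√(2*π*v))⁻¹ * exp (-(x-m)^2/(2*(v:ℝ))) := rfl
      _ ≤ (√(2*π*v))⁻¹ * exp (-(r-m)^2/(2*(v:ℝ)) + -(x-r)^2/(2*(v:ℝ))) := by
          gcongr
          rw [← add_div]
          gcongr
          nlinarith [mul_nonneg (sub_nonneg.2 hxr) (sub_nonneg.2 hmr)]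
      _ = exp (-(r-m)^2/(2*(v:ℝ))) * gaussianPDFReal r v x := by
          rw [exp_add, gaussianPDFReal]; ring
  calc gaussianReal m v (Ioi r) = ∫⁻ x in Ioi r, gaussianPDF m v x :=
        gaussianReal_apply _ hv _
    _ ≤ ∫⁻ x in Ioi r, ENNReal.ofReal (exp (-(r-m)^2/(2*(v:ℝ)))) * gaussianPDF r v x :=
        setLIntegral_mono ((measurable_gaussianPDF r v).const_mul _) hpt
    _ = ENNReal.ofReal (exp (-(r-m)^2/(2*(v:ℝ)))) * ∫⁻ x in Ioi r, gaussianPDF r v x :=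
        lintegral_const_mul _ (measurable_gaussianPDF r v)
    _ = ENNReal.ofReal (exp (-(r-m)^2/(2*(v:ℝ)))) * gaussianReal r v (Ioi r) := by
        rw [gaussianReal_apply _ hv]
    _ ≤ ENNReal.ofReal (exp (-(r-m)^2/(2*(v:ℝ)))) * (1/2) :=
        mul_le_mul_right (gaussian_Ioi_le_half r v) _
    _ = ENNReal.ofReal (exp (-(r-m)^2/(2*(v:ℝ))) / 2) := by
        rw [mul_one_div, ENNReal.ofReal_div_of_pos (by norm_num), ENNReal.ofReal_ofNat]

lemma gaussian_strip (m r σ : ℝ) (hσ : 0 < σ) (hrm : r ≤ m) :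
    gaussianReal m (⟨σ^2, sq_nonneg σ⟩ : ℝ≥0) (Ioc r m)
      ≤ ENNReal.ofReal ((m - r)/(2*σ)) := by
  set v : ℝ≥0 := ⟨σ^2, sq_nonneg σ⟩ with hvdef
  have hv : v ≠ 0 := by
    rw [← NNReal.coe_ne_zero]; show (σ^2 : ℝ) ≠ 0; positivity
  have hpdf : ∀ x, gaussianPDF m v x ≤ ENNReal.ofReal ((2*σ)⁻¹) := by
    intro x
    refine ENNReal.ofReal_le_ofReal ?_
    have hsq : 2*σ ≤ √(2*π*(v:ℝ)) := by
      rw [show ((v:ℝ)) = σ^2 from rfl, show 2*σ = √((2*σ)^2) from (Real.sqrt_sq (by positivity)).symm]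
      apply Real.sqrt_le_sqrt
      nlinarith [Real.pi_gt_three]
    calc gaussianPDFReal m v x = (√(2*π*v))⁻¹ * exp (-(x-m)^2/(2*(v:ℝ))) := rfl
      _ ≤ (√(2*π*v))⁻¹ * 1 := by
          gcongr
          refine exp_le_one_iff.mpr ?_
          have : (0:ℝ) < (v:ℝ) := by positivity
          have h2 : (0:ℝ) ≤ (x-m)^2 := sq_nonneg _
          rw [div_nonpos_iff]; right; constructor <;> nlinarith
      _ ≤ (2*σ)⁻¹ := by
          rw [mul_one]
          exact inv_anti₀ (by positivity) hsq
  calc gaussianReal m v (Ioc r m) = ∫⁻ x in Ioc r m, gaussianPDF m v x :=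
        gaussianReal_apply _ hv _
    _ ≤ ∫⁻ _x in Ioc r m, ENNReal.ofReal ((2*σ)⁻¹) :=
        setLIntegral_mono measurable_const (fun x _ => hpdf x)
    _ = ENNReal.ofReal ((2*σ)⁻¹) * volume (Ioc r m) := by
        rw [setLIntegral_const]
    _ = ENNReal.ofReal ((2*σ)⁻¹) * ENNReal.ofReal (m - r) := by
        rw [Real.volume_Ioc]
    _ = ENNReal.ofReal ((m - r)/(2*σ)) := by
        rw [← ENNReal.ofReal_mul (by positivity), inv_mul_eq_div]

lemma arith_large (ε δ L t s : ℝ) (hε : 0 < ε) (hε1 : ε < 1) (hδ : 0 < δ)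
    (hL : 0 < L) (ht : 0 < t) (ht2 : t^2 = 2*L) (hexpL : rexp (-L) = δ/1.25)
    (hs0 : 0 ≤ t - ε/(2*t)) (hs : t - ε/(2*t) ≤ s) :
    rexp (-(s^2/2))/2 ≤ δ := by
  have hexpL' : rexp (-L) = δ * (4/5) := by rw [hexpL]; norm_num; ring
  have hte : t * (ε/(2*t)) = ε/2 := by field_simp
  have hs02 : 2*L - ε ≤ (t - ε/(2*t))^2 := by nlinarith [sq_nonneg (ε/(2*t))]
  have hmono : (t - ε/(2*t))^2 ≤ s^2 := by nlinarith
  have he1 : rexp (-(s^2/2)) ≤ rexp (-L + 1/2) := by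
    apply Real.exp_le_exp.mpr; linarith
  have he2 : rexp (-L + 1/2) = (δ * (4/5)) * rexp (1/2) := by
    rw [Real.exp_add, hexpL']
  have he3 : rexp (1/2) ≤ 2.5 := by
    have h := Real.exp_one_lt_d9
    have hsq : rexp (1/2) * rexp (1/2) = rexp 1 := by
      rw [← Real.exp_add]; norm_num
    nlinarith [Real.exp_pos (1/2 : ℝ)]
  have he4 : (δ * (4/5)) * rexp (1/2) ≤ (δ * (4/5)) * 2.5 := by
    apply mul_le_mul_of_nonneg_left he3 (by positivity)
  have he5 : (δ * (4/5)) * 2.5 = 2 * δ := by ring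
  linarith

lemma arith_small (ε δ L t : ℝ) (hε : 0 < ε) (hε1 : ε < 1) (hδ : 0 < δ)
    (hL : 0 < L) (ht : 0 < t) (ht2 : t^2 = 2*L) (hexpL : rexp (-L) = δ/1.25)
    (hLlb : 1/5 ≤ L) (hts : 2*t^2 < ε) :
    -(t - ε/(2*t))/2 + 1/2 ≤ δ := by
  have hexpL' : rexp (-L) = δ * (4/5) := by rw [hexpL]; norm_num; ring
  have hδL : (5/4 : ℝ) * (1 - L) ≤ δ := by
    have h := Real.add_one_le_exp (-L)
    nlinarith
  have hinv : t * (1/(2*t)) = 1/2 := by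
    field_simp
  have hub : ε/(2*t) ≤ 1/(2*t) := by
    gcongr
  have htlb : 2/5 ≤ t^2 := by linarith
  have htub : t^2 ≤ 1/2 := by linarith
  have hgoal : 1/(2*t)/2 - t/2 + 1/2 ≤ (5/4 : ℝ) * (1 - t^2/2) := by
    nlinarith [hinv, mul_pos ht ht, sq_nonneg (t - 7/10), sq_nonneg (t - 3/5),
      mul_pos (mul_pos ht ht) ht]
  have hL2 : L = t^2/2 := by linarith
  calc -(t - ε/(2*t))/2 + 1/2 ≤ 1/(2*t)/2 - t/2 + 1/2 := by linarith
    _ ≤ (5/4 : ℝ) * (1 - t^2/2) := hgoal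
    _ ≤ δ := by rw [← hL2] at *; linarith

lemma gaussian_bad_mass (C ε δ σ : ℝ) (hC : 0 < C) (hε : 0 < ε) (hε1 : ε < 1)
    (hδ : 0 < δ) (hδ1 : δ < 1)
    (hσ : σ = C * Real.sqrt (2 * Real.log (1.25 / δ)) / ε)
    (m Δ : ℝ) (hΔ0 : 0 < Δ) (hΔC : Δ ≤ C) :
    gaussianReal m (⟨σ^2, sq_nonneg σ⟩ : ℝ≥0) (Ioi (m + (σ^2*ε/Δ - Δ/2)))
      ≤ ENNReal.ofReal δ := by
  set L : ℝ := Real.log (1.25 / δ) with hLdef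
  have hL : 0 < L := Real.log_pos (by rw [lt_div_iff₀ hδ]; linarith)
  set t : ℝ := Real.sqrt (2 * L) with htdef
  have ht : 0 < t := Real.sqrt_pos.2 (by linarith)
  have ht2 : t^2 = 2*L := Real.sq_sqrt (by linarith)
  have hσt : σ = C * t / ε := hσ
  have hσpos : 0 < σ := by rw [hσt]; positivity
  have hσε : σ * ε = C * t := by rw [hσt]; field_simp
  set v : ℝ≥0 := ⟨σ^2, sq_nonneg σ⟩ with hvdef
  have hv : v ≠ 0 := by
    rw [← NNReal.coe_ne_zero]; show (σ^2 : ℝ) ≠ 0; positivity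
  set s : ℝ := σ*ε/Δ - Δ/(2*σ) with hsdef
  have hr : σ^2*ε/Δ - Δ/2 = σ * s := by rw [hsdef]; field_simp
  set s₀ : ℝ := t - ε/(2*t) with hs0def
  have hs : s₀ ≤ s := by
    have h1 : t ≤ σ*ε/Δ := by
      rw [hσε, le_div_iff₀ hΔ0]; nlinarith
    have h2 : Δ/(2*σ) ≤ ε/(2*t) := by
      rw [div_le_div_iff₀ (by positivity) (by positivity)]
      nlinarith
    rw [hsdef, hs0def]; linarith
  have hexpL : Real.exp (-L) = δ / 1.25 := by
    rw [Real.exp_neg, hLdef, Real.exp_log (by positivity), inv_div]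
  clear_value L t s s₀
  rcases le_or_gt 0 s₀ with hs0 | hs0
  · -- large case
    have hss : 0 ≤ s := le_trans hs0 hs
    have hmr : m ≤ m + (σ^2*ε/Δ - Δ/2) := by rw [hr]; nlinarith
    refine (gaussian_tail m _ v hv hmr).trans (ENNReal.ofReal_le_ofReal ?_)
    have harg : -(m + (σ^2*ε/Δ - Δ/2) - m)^2/(2*(v:ℝ)) = -(s^2/2) := by
      rw [hr, show ((v:ℝ)) = σ^2 from rfl]
      field_simp
      ring
    rw [harg]
    rw [hs0def] at hs0 hs
    exact arith_large ε δ L t s hε hε1 hδ hL ht ht2 hexpL hs0 hs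
  · -- small case
    have hts : 2*t^2 < ε := by
      rw [hs0def] at hs0
      have h3 : t < ε/(2*t) := by linarith
      rw [lt_div_iff₀ (by positivity)] at h3; nlinarith
    have hLlb : 1/5 ≤ L := by
      have h08 : (1/5 : ℝ) ≤ Real.log (1.25) := by
        have h := Real.log_le_sub_one_of_pos (show (0:ℝ) < 0.8 by norm_num)
        have h2 : Real.log 0.8 = - Real.log 1.25 := by
          rw [← Real.log_inv]; norm_num
        rw [h2] at h; linarith
      have hmono : Real.log 1.25 ≤ L := by
        rw [hLdef]
        apply Real.log_le_log (by norm_num)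
        rw [le_div_iff₀ hδ]; nlinarith
      linarith
    have hsub : Ioi (m + (σ^2*ε/Δ - Δ/2)) ⊆ Ioi (m + σ*s₀) := by
      apply Ioi_subset_Ioi
      rw [hr]; nlinarith
    refine (measure_mono hsub).trans ?_
    have hsplit : Ioi (m + σ*s₀) ⊆ Ioc (m + σ*s₀) m ∪ Ioi m := by
      intro x hx
      rcases le_or_gt x m with h | h
      · exact Or.inl ⟨hx, h⟩
      · exact Or.inr h
    refine (measure_mono hsplit).trans ((measure_union_le _ _).trans ?_)
    have hb1 : gaussianReal m v (Ioc (m + σ*s₀) m) ≤ ENNReal.ofReal (-s₀/2) := by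
      have hst := gaussian_strip m (m + σ*s₀) σ hσpos (by nlinarith)
      have harg : (m - (m + σ*s₀))/(2*σ) = -s₀/2 := by field_simp; ring
      rw [harg] at hst
      exact hst
    have hhalf2 : (1/2 : ℝ≥0∞) = ENNReal.ofReal (1/2) := by
      rw [ENNReal.ofReal_div_of_pos (by norm_num), ENNReal.ofReal_ofNat, ENNReal.ofReal_one]
    refine (add_le_add hb1 ((gaussian_Ioi_le_half m v).trans_eq hhalf2)).trans ?_
    rw [← ENNReal.ofReal_add (by nlinarith) (by norm_num)]
    apply ENNReal.ofReal_le_ofReal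
    have harith := arith_small ε δ L t hε hε1 hδ hL ht ht2 hexpL hLlb hts
    rw [hs0def]
    linarith

end GaussianDPHelpers

section MainTheorem
open Real Set NNReal ENNReal in
/-- The (one-dimensional) Gaussian mechanism: if `f` has sensitivity at most `C` over adjacent
datasets and `σ = C · √(2 log(1.25/δ)) / ε`, then `d ↦ gaussianReal (f d) σ²` is `(ε, δ)`-DP. -/
theorem gaussian_mechanism_dp
    {D : Type*} (adj : D → D → Prop)
    (f : D → ℝ) (C : ℝ) (hC : 0 < C)
    (hsens : ∀ d d', adj d d' → |f d - f d'| ≤ C)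
    (ε δ : ℝ) (hε : 0 < ε) (hε1 : ε < 1) (hδ : 0 < δ) (hδ1 : δ < 1)
    (σ : ℝ) (hσ : σ = C * Real.sqrt (2 * Real.log (1.25 / δ)) / ε) :
    ∀ d d', adj d d' → ∀ S : Set ℝ, MeasurableSet S →
      gaussianReal (f d) ⟨σ ^ 2, sq_nonneg σ⟩ S ≤
        ENNReal.ofReal (Real.exp ε) * gaussianReal (f d') ⟨σ ^ 2, sq_nonneg σ⟩ S +
          ENNReal.ofReal δ := by
  intro d d' hadj S hS
  have hone : (1 : ℝ≥0∞) ≤ ENNReal.ofReal (Real.exp ε) := by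
    rw [← ENNReal.ofReal_one]
    exact ENNReal.ofReal_le_ofReal (Real.one_le_exp hε.le)
  set a := f d with hadef
  set b := f d' with hbdef
  have hΔC : |a - b| ≤ C := hsens d d' hadj
  have hL : 0 < Real.log (1.25 / δ) := Real.log_pos (by rw [lt_div_iff₀ hδ]; linarith)
  have hσpos : 0 < σ := by rw [hσ]; positivity
  set v : ℝ≥0 := ⟨σ^2, sq_nonneg σ⟩ with hvdef
  have hv : v ≠ 0 := by
    rw [← NNReal.coe_ne_zero]; show (σ^2 : ℝ) ≠ 0; positivity
  by_cases hab : a = b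
  · rw [hab]
    calc gaussianReal b v S = 1 * gaussianReal b v S := (one_mul _).symm
      _ ≤ ENNReal.ofReal (Real.exp ε) * gaussianReal b v S := by
          exact mul_le_mul_left hone _
      _ ≤ _ := le_self_add
  · obtain ⟨Δ, hΔdef⟩ : ∃ Δ : ℝ, Δ = a - b := ⟨_, rfl⟩
    have hΔC' : |Δ| ≤ C := hΔdef ▸ hΔC
    have hΔne : Δ ≠ 0 := hΔdef ▸ sub_ne_zero.2 hab
    obtain ⟨r, hrdef⟩ : ∃ r : ℝ, r = σ^2*ε/Δ + (a+b)/2 := ⟨_, rfl⟩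
    set B : Set ℝ := if 0 < Δ then Ioi r else Iio r with hBdef
    have hBmeas : MeasurableSet B := by
      rw [hBdef]; split
      · exact measurableSet_Ioi
      · exact measurableSet_Iio
    -- pointwise density bound off B
    have hgood : ∀ x ∈ S \ B, gaussianPDF a v x
        ≤ ENNReal.ofReal (Real.exp ε) * gaussianPDF b v x := by
      intro x hx
      have hxB : x ∉ B := hx.2
      have hkey : Δ * (2*x - a - b) ≤ 2*σ^2*ε := by
        have hΔr : Δ * r = σ^2*ε + Δ*(a+b)/2 := by
          rw [hrdef]; field_simp
        rcases lt_or_gt_of_ne hΔne with hneg | hpos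
        · have : ¬ (x < r) := by
            rw [hBdef] at hxB; simp only [if_neg (not_lt.2 hneg.le)] at hxB
            simpa using hxB
          have hxr : r ≤ x := not_lt.1 this
          nlinarith [mul_le_mul_of_nonpos_left hxr hneg.le]
        · have : ¬ (r < x) := by
            rw [hBdef] at hxB; simp only [if_pos hpos] at hxB
            simpa using hxB
          have hxr : x ≤ r := not_lt.1 this
          nlinarith [mul_le_mul_of_nonneg_left hxr hpos.le]
      rw [gaussianPDF, gaussianPDF, ← ENNReal.ofReal_mul (Real.exp_nonneg _)]
      refine ENNReal.ofReal_le_ofReal ?_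
      have h2σ : (0:ℝ) < 2*σ^2 := by positivity
      calc gaussianPDFReal a v x
          = (√(2*π*v))⁻¹ * rexp (-(x-a)^2/(2*(v:ℝ))) := rfl
        _ ≤ (√(2*π*v))⁻¹ * rexp (ε + -(x-b)^2/(2*(v:ℝ))) := by
            gcongr
            rw [show ((v:ℝ)) = σ^2 from rfl,
              show ε + -(x-b)^2/(2*σ^2) = (2*σ^2*ε + -(x-b)^2)/(2*σ^2) by field_simp]
            gcongr
            rw [hΔdef] at hkey
            nlinarith [hkey]
        _ = Real.exp ε * gaussianPDFReal b v x := by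
            rw [Real.exp_add, gaussianPDFReal]; ring
    -- bad set mass
    have hbad : gaussianReal a v B ≤ ENNReal.ofReal δ := by
      rcases lt_or_gt_of_ne hΔne with hneg | hpos
      · -- Δ < 0 : B = Iio r, reflect
        have hBeq : B = Iio r := by rw [hBdef, if_neg (not_lt.2 hneg.le)]
        have hmap : gaussianReal (-a) v (Ioi (-r)) = gaussianReal a v (Iio r) := by
          have hc : NNReal.mk ((-1:ℝ)^2) (sq_nonneg _) = 1 := by ext; norm_num
          have h1 : gaussianReal (-a) v = (gaussianReal a v).map (fun x => (-1) * x) := by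
            rw [gaussianReal_map_const_mul, hc, one_mul]; norm_num
          rw [h1, Measure.map_apply (by fun_prop) measurableSet_Ioi]
          congr 1
          ext x
          simp only [mem_preimage, mem_Ioi, mem_Iio]
          constructor <;> intro <;> linarith
        have hr' : -r = -a + (σ^2*ε/(-Δ) - (-Δ)/2) := by
          rw [hrdef, div_neg, hΔdef]; ring
        rw [hBeq, ← hmap, hr']
        exact gaussian_bad_mass C ε δ σ hC hε hε1 hδ hδ1 hσ (-a) (-Δ)
          (by cases (hΔne.lt_or_gt) <;> [skip; linarith] <;> linarith) (by cases abs_cases Δ <;> linarith)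
      · have hBeq : B = Ioi r := by rw [hBdef, if_pos hpos]
        have hr' : r = a + (σ^2*ε/Δ - Δ/2) := by
          rw [hrdef, hΔdef]; field_simp [sub_ne_zero.2 hab]; ring
        rw [hBeq, hr']
        exact gaussian_bad_mass C ε δ σ hC hε hε1 hδ hδ1 hσ a Δ hpos
          (by cases abs_cases Δ <;> linarith)
    -- assemble
    calc gaussianReal a v S
        = gaussianReal a v (S ∩ B) + gaussianReal a v (S \ B) :=
          (measure_inter_add_diff S hBmeas).symm
      _ ≤ ENNReal.ofReal δ + ENNReal.ofReal (Real.exp ε) * gaussianReal b v S := by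
          refine add_le_add ((measure_mono inter_subset_right).trans hbad) ?_
          calc gaussianReal a v (S \ B) = ∫⁻ x in S \ B, gaussianPDF a v x :=
                gaussianReal_apply _ hv _
            _ ≤ ∫⁻ x in S \ B, ENNReal.ofReal (Real.exp ε) * gaussianPDF b v x :=
                setLIntegral_mono ((measurable_gaussianPDF b v).const_mul _) hgood
            _ = ENNReal.ofReal (Real.exp ε) * ∫⁻ x in S \ B, gaussianPDF b v x :=
                lintegral_const_mul _ (measurable_gaussianPDF b v)
            _ = ENNReal.ofReal (Real.exp ε) * gaussianReal b v (S \ B) := by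
                rw [gaussianReal_apply _ hv]
            _ ≤ ENNReal.ofReal (Real.exp ε) * gaussianReal b v S :=
                mul_le_mul_right (measure_mono diff_subset) _
      _ = ENNReal.ofReal (Real.exp ε) * gaussianReal b v S + ENNReal.ofReal δ := by
          rw [add_comm]

end MainTheorem
end
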